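/- arXiv:2506.02756 — 3 statements merged into one kernel-verified Lean document; each statement's English description precedes it below -/
import Mathlib

section
/- Forward direction of the reduction: let (U, 𝒮, k) be a SET COVER instance with #𝒮 ≥ k ≥ 2 admitting a cover 𝒞 ⊆ 𝒮 with #𝒞 ≤ k and ⋃𝒞 = U. Then the associated EDU-TF instance—with one student per set in 𝒮 (skill set equal to that set), n − 1 additional all-rounder students with skill set U, where n = ⌈(#𝒮 − 1)/(k − 1)⌉, team size bounds k_min = 1 and k_max = k, and minimum skill coverage c = #U—admits a feasible solution. -/
/-- Students of the EDU-TF instance built from a SET COVER instance: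
one student per set in `𝒮`, plus `n - 1` all-rounders. -/
abbrev ReductionStudent (𝒮 : Finset (Finset ℕ)) (n : ℕ) : Type :=
  {s // s ∈ 𝒮} ⊕ Fin (n - 1)

/-- Skill sets of the students: a set-student has that set as skill set,
an all-rounder has skill set `U`. -/
def reductionSkill (U : Finset ℕ) (𝒮 : Finset (Finset ℕ)) (n : ℕ) :
    ReductionStudent 𝒮 n → Finset ℕ
  | .inl s => s.val
  | .inr _ => U

/-- Forward direction of the reduction from SET COVER to EDU-TF:
if the SET COVER instance `(U, 𝒮, k)` with `#𝒮 ≥ k ≥ 2` has a cover `𝒞 ⊆ 𝒮`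
with `#𝒞 ≤ k` and `⋃ 𝒞 = U`, then the associated EDU-TF instance (with
`n = ⌈(#𝒮 - 1)/(k - 1)⌉`, `n - 1` all-rounders, team sizes in `[1, k]` and
minimum skill coverage `c = #U`) admits a feasible solution. -/
theorem set_cover_to_edu_tf_forward
    (U : Finset ℕ) (𝒮 : Finset (Finset ℕ)) (k n : ℕ)
    (hk : 2 ≤ k) (hks : k ≤ 𝒮.card) (hsub : ∀ s ∈ 𝒮, s ⊆ U)
    (hn : n = (𝒮.card - 1) ⌈/⌉ (k - 1))
    (hcov : ∃ 𝒞 ⊆ 𝒮, 𝒞.card ≤ k ∧ 𝒞.biUnion id = U) :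
    ∃ T : Fin n → Finset (ReductionStudent 𝒮 n),
      (∀ i j : Fin n, i ≠ j → Disjoint (T i) (T j)) ∧
      (Finset.univ.biUnion T = Finset.univ) ∧
      (∀ j : Fin n, 1 ≤ (T j).card ∧ (T j).card ≤ k ∧
        U.card ≤ ((T j).biUnion (reductionSkill U 𝒮 n)).card) := by
  classical
  obtain ⟨𝒞, h𝒞S, h𝒞k, h𝒞U⟩ := hcov
  obtain ⟨𝒞', h𝒞𝒞', h𝒞'S, h𝒞'card⟩ := Finset.exists_subsuperset_card_eq h𝒞S h𝒞k hks
  have hk1 : 0 < k - 1 := by omega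
  have hnpos : 0 < n := by
    rw [hn, Nat.ceilDiv_eq_add_pred_div]
    exact Nat.div_pos (by omega) hk1
  have hmul : 𝒮.card - 1 ≤ n * (k - 1) := by
    have := le_smul_ceilDiv (b := 𝒮.card - 1) hk1
    rw [smul_eq_mul, ← hn, mul_comm] at this
    exact this
  have hbound : 𝒮.card - k ≤ (n - 1) * (k - 1) := by
    have h1 : (n - 1) * (k - 1) = n * (k - 1) - 1 * (k - 1) := by
      rw [← Nat.sub_mul]
    rw [h1, one_mul]
    omega
  set R : Finset {s // s ∈ 𝒮} := Finset.univ.filter (fun s => s.val ∉ 𝒞') with hR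
  have hmemR : ∀ s : {s // s ∈ 𝒮}, s.val ∉ 𝒞' → s ∈ R := by
    intro s h; simp [hR, h]
  have hRcard : R.card ≤ 𝒮.card - k := by
    have h2 : R.card ≤ (𝒮 \ 𝒞').card := by
      apply Finset.card_le_card_of_injOn (fun s => s.val)
      · intro s hs
        simp only [Finset.mem_coe, hR, Finset.mem_filter] at hs
        simp [Finset.mem_sdiff, s.2, hs.2]
      · intro a _ b _ h; exact Subtype.ext h
    have hsd : (𝒮 \ 𝒞').card = 𝒮.card - k := by
      rw [Finset.card_sdiff_of_subset h𝒞'S, h𝒞'card]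
    omega
  have hRb : R.card ≤ (n - 1) * (k - 1) := le_trans hRcard hbound
  let e : {x // x ∈ R} ≃ Fin R.card := R.equivFin
  have hdiv : ∀ i : ℕ, i < R.card → i / (k - 1) + 1 < n := by
    intro i hi
    have h3 : i / (k - 1) < n - 1 := by
      rw [Nat.div_lt_iff_lt_mul hk1]
      have := lt_of_lt_of_le hi hRb
      omega
    omega
  let A : ReductionStudent 𝒮 n → Fin n := Sum.elim
    (fun s => if h : s.val ∈ 𝒞' then ⟨0, hnpos⟩
      else ⟨(e ⟨s, hmemR s h⟩).val / (k - 1) + 1, hdiv _ (e ⟨s, hmemR s h⟩).isLt⟩)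
    (fun j => ⟨j.val + 1, by have := j.isLt; omega⟩)
  refine ⟨fun i => Finset.univ.filter (fun x => A x = i), ?_, ?_, ?_⟩
  · intro i j hij
    rw [Finset.disjoint_left]
    intro x hx hx'
    simp only [Finset.mem_filter] at hx hx'
    exact hij (hx.2 ▸ hx'.2)
  · ext x
    simp only [Finset.mem_biUnion, Finset.mem_filter, Finset.mem_univ, true_and,
      iff_true]
    exact ⟨A x, rfl⟩

  · rintro ⟨jv, hjv⟩
    have hmem : ∀ x, x ∈ Finset.univ.filter (fun x => A x = (⟨jv, hjv⟩ : Fin n)) ↔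
        A x = ⟨jv, hjv⟩ := by
      intro x; simp
    rcases jv with _ | i
    · -- team 0 : the cover
      have hA0 : ∀ x, A x = (⟨0, hjv⟩ : Fin n) →
          ∃ s : {s // s ∈ 𝒮}, x = .inl s ∧ s.val ∈ 𝒞' := by
        rintro (s | j) h
        · by_cases hs : s.val ∈ 𝒞'
          · exact ⟨s, rfl, hs⟩
          · exfalso
            simp only [A, Sum.elim_inl, dif_neg hs, Fin.mk.injEq] at h
            exact Nat.succ_ne_zero _ h
        · exfalso
          simp only [A, Sum.elim_inr, Fin.mk.injEq] at h
          exact Nat.succ_ne_zero _ h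
      have hA0' : ∀ s : {s // s ∈ 𝒮}, s.val ∈ 𝒞' →
          A (.inl s) = (⟨0, hjv⟩ : Fin n) := by
        intro s hs
        simp [A, dif_pos hs]
      refine ⟨?_, ?_, ?_⟩
      · have hne : 𝒞'.Nonempty := by
          rw [← Finset.card_pos, h𝒞'card]; omega
        obtain ⟨c, hc⟩ := hne
        exact Finset.card_pos.mpr ⟨.inl ⟨c, h𝒞'S hc⟩, (hmem _).2 (hA0' _ hc)⟩
      · calc (Finset.univ.filter (fun x => A x = (⟨0, hjv⟩ : Fin n))).card
            ≤ 𝒞'.card := by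
              apply Finset.card_le_card_of_injOn (reductionSkill U 𝒮 n)
              · intro x hx
                obtain ⟨s, rfl, hs⟩ := hA0 x ((hmem x).1 hx)
                exact hs
              · intro x hx y hy hxy
                obtain ⟨s, rfl, hs⟩ := hA0 x ((hmem x).1 hx)
                obtain ⟨t, rfl, ht⟩ := hA0 y ((hmem y).1 hy)
                exact congrArg Sum.inl (Subtype.ext hxy)
          _ = k := h𝒞'card
      · apply Finset.card_le_card
        intro u hu
        rw [← h𝒞U] at hu
        obtain ⟨c, hc, hu⟩ := Finset.mem_biUnion.1 hu
        refine Finset.mem_biUnion.2 ⟨.inl ⟨c, h𝒞S hc⟩,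
          (hmem _).2 (hA0' _ (h𝒞𝒞' hc)), ?_⟩
        simpa [reductionSkill] using hu
    · -- team i+1 : one all-rounder plus leftover set-students
      have hilt : i < n - 1 := by omega
      have hAchar : ∀ x, A x = (⟨i + 1, hjv⟩ : Fin n) →
          (x = .inr ⟨i, hilt⟩) ∨
          (∃ s : {s // s ∈ 𝒮}, x = .inl s ∧ ∃ h : s.val ∉ 𝒞',
            (e ⟨s, hmemR s h⟩).val / (k - 1) = i) := by
        rintro (s | j) h
        · right
          by_cases hs : s.val ∈ 𝒞'
          · exfalso
            simp only [A, Sum.elim_inl, dif_pos hs, Fin.mk.injEq] at h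
            exact Nat.succ_ne_zero _ h.symm
          · refine ⟨s, rfl, hs, ?_⟩
            simp only [A, Sum.elim_inl, dif_neg hs, Fin.mk.injEq] at h
            exact Nat.succ_injective h
        · left
          simp only [A, Sum.elim_inr, Fin.mk.injEq] at h
          exact congrArg Sum.inr (Fin.ext (show j.val = i from Nat.succ_injective h))
      have hinr : A (.inr ⟨i, hilt⟩) = (⟨i + 1, hjv⟩ : Fin n) := by
        simp [A]
      refine ⟨?_, ?_, ?_⟩
      · exact Finset.card_pos.mpr ⟨.inr ⟨i, hilt⟩, (hmem _).2 hinr⟩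
      · have : (Finset.univ.filter (fun x => A x = (⟨i + 1, hjv⟩ : Fin n))).card
            ≤ (Finset.range k).card := by
          apply Finset.card_le_card_of_injOn (Sum.elim
            (fun s => if h : s.val ∈ 𝒞' then k else (e ⟨s, hmemR s h⟩).val % (k - 1))
            (fun _ => k - 1))
          · intro x hx
            rcases hAchar x ((hmem x).1 hx) with rfl | ⟨s, rfl, hs, hq⟩
            · simp only [Sum.elim_inr, Finset.mem_coe, Finset.mem_range]; omega
            · simp only [Sum.elim_inl, dif_neg hs, Finset.mem_coe, Finset.mem_range]
              have := Nat.mod_lt (e ⟨s, hmemR s hs⟩).val hk1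
              omega
          · intro x hx y hy hxy
            rcases hAchar x ((hmem x).1 hx) with rfl | ⟨s, rfl, hs, hqs⟩ <;>
              rcases hAchar y ((hmem y).1 hy) with rfl | ⟨t, rfl, ht, hqt⟩
            · rfl
            · exfalso
              simp only [Sum.elim_inr, Sum.elim_inl, dif_neg ht] at hxy
              have := Nat.mod_lt (e ⟨t, hmemR t ht⟩).val hk1
              omega
            · exfalso
              simp only [Sum.elim_inr, Sum.elim_inl, dif_neg hs] at hxy
              have := Nat.mod_lt (e ⟨s, hmemR s hs⟩).val hk1
              omega
            · simp only [Sum.elim_inl, dif_neg hs, dif_neg ht] at hxy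
              have hval : (e ⟨s, hmemR s hs⟩).val = (e ⟨t, hmemR t ht⟩).val := by
                conv_lhs => rw [← Nat.div_add_mod (e ⟨s, hmemR s hs⟩).val (k - 1)]
                conv_rhs => rw [← Nat.div_add_mod (e ⟨t, hmemR t ht⟩).val (k - 1)]
                rw [hqs, hqt, hxy]
              have := e.injective (Fin.ext hval)
              have : s = t := congrArg Subtype.val this
              exact congrArg Sum.inl this
        simpa using this
      · apply Finset.card_le_card
        intro u hu
        exact Finset.mem_biUnion.2 ⟨.inr ⟨i, hilt⟩, (hmem _).2 hinr,
          by simpa [reductionSkill] using hu⟩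
end

section
/- Backward direction of the reduction: if the EDU-TF instance constructed from a SET COVER instance (U, 𝒮, k) with #𝒮 ≥ k ≥ 2 (students with skill sets from 𝒮 plus n − 1 all-rounders, n = ⌈(#𝒮 − 1)/(k − 1)⌉, k_min = 1, k_max = k, c = #U) has a feasible solution, then there exists 𝒞 ⊆ 𝒮 with #𝒞 ≤ k and ⋃𝒞 = U. -/
/-- Backward direction of the reduction: if the EDU-TF instance
constructed from a SET COVER instance `(U, 𝒮, k)` with `#𝒮 ≥ k ≥ 2`
(`n = ⌈(#𝒮 - 1)/(k - 1)⌉`, `n - 1` all-rounders, team sizes in `[1, k]`,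
minimum skill coverage `c = #U`) has a feasible solution, then there exists
`𝒞 ⊆ 𝒮` with `#𝒞 ≤ k` and `⋃ 𝒞 = U`. -/
theorem set_cover_to_edu_tf_backward
    (U : Finset ℕ) (𝒮 : Finset (Finset ℕ)) (k n : ℕ)
    (hk : 2 ≤ k) (hks : k ≤ 𝒮.card) (hsub : ∀ s ∈ 𝒮, s ⊆ U)
    (hn : n = (𝒮.card - 1) ⌈/⌉ (k - 1))
    (hfeas : ∃ T : Fin n → Finset (ReductionStudent 𝒮 n),
      (∀ i j : Fin n, i ≠ j → Disjoint (T i) (T j)) ∧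
      (Finset.univ.biUnion T = Finset.univ) ∧
      (∀ j : Fin n, 1 ≤ (T j).card ∧ (T j).card ≤ k ∧
        U.card ≤ ((T j).biUnion (reductionSkill U 𝒮 n)).card)) :
    ∃ 𝒞 ⊆ 𝒮, 𝒞.card ≤ k ∧ 𝒞.biUnion id = U := by
  obtain ⟨T, hdisj, hcover, hsize⟩ := hfeas
  -- n ≥ 1
  have hn1 : 1 ≤ n := by
    rw [hn, Nat.ceilDiv_eq_add_pred_div, Nat.one_le_div_iff (by omega)]
    omega
  -- assign each all-rounder to its team
  have hg : ∀ a : Fin (n - 1), ∃ i : Fin n, Sum.inr a ∈ T i := by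
    intro a
    have : (Sum.inr a : ReductionStudent 𝒮 n) ∈ Finset.univ.biUnion T := by
      rw [hcover]; exact Finset.mem_univ _
    simpa using this
  choose g hgmem using hg
  -- g is not surjective
  have : ¬ Function.Surjective g := by
    intro hs
    have := Nat.card_le_card_of_surjective g hs
    simp [Nat.card_eq_fintype_card] at this
    omega
  rw [Function.Surjective] at this
  push_neg at this
  obtain ⟨j, hj⟩ := this
  -- T j contains no all-rounder
  have hnoinr : ∀ x ∈ T j, ∃ s : {s // s ∈ 𝒮}, x = Sum.inl s := by
    intro x hx
    match x with
    | .inl s => exact ⟨s, rfl⟩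
    | .inr a =>
      exfalso
      have hne : g a ≠ j := hj a
      exact Finset.disjoint_left.mp (hdisj (g a) j hne) (hgmem a) hx
  refine ⟨(T j).image (reductionSkill U 𝒮 n), ?_, ?_, ?_⟩
  · intro s hs
    simp only [Finset.mem_image] at hs
    obtain ⟨x, hx, rfl⟩ := hs
    obtain ⟨t, rfl⟩ := hnoinr x hx
    exact t.2
  · exact le_trans (Finset.card_image_le) (hsize j).2.1
  · have hsub' : ((T j).image (reductionSkill U 𝒮 n)).biUnion id ⊆ U := by
      intro u hu
      simp only [Finset.mem_biUnion, Finset.mem_image, id] at hu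
      obtain ⟨t, ⟨x, hx, rfl⟩, hu⟩ := hu
      obtain ⟨s, rfl⟩ := hnoinr x hx
      exact hsub s.1 s.2 hu
    have heq : ((T j).image (reductionSkill U 𝒮 n)).biUnion id
        = (T j).biUnion (reductionSkill U 𝒮 n) := by
      exact Finset.image_biUnion
    refine Finset.Subset.antisymm hsub' ?_
    apply Finset.subset_of_eq
    symm
    apply Finset.eq_of_subset_of_card_le hsub'
    rw [heq]
    exact (hsize j).2.2
end

section
/- The SET COVER instance (U, 𝒮, k) with #𝒮 ≥ k ≥ 2 has a solution if and only if the EDU-TF instance constructed in the reduction (students with skill sets 𝒮 plus n − 1 all-rounders with skill set U, n = ⌈(#𝒮 − 1)/(k − 1)⌉, team sizes in [1, k], minimum skill coverage #U) is feasible. -/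
/-- Correctness of the reduction: the SET COVER instance
`(U, 𝒮, k)` with `#𝒮 ≥ k ≥ 2` has a solution iff the constructed EDU-TF
instance (`n = ⌈(#𝒮 - 1)/(k - 1)⌉`, `n - 1` all-rounders with skill set `U`,
team sizes in `[1, k]`, minimum skill coverage `#U`) is feasible. -/
theorem set_cover_iff_edu_tf_feasible
    (U : Finset ℕ) (𝒮 : Finset (Finset ℕ)) (k n : ℕ)
    (hk : 2 ≤ k) (hks : k ≤ 𝒮.card) (hsub : ∀ s ∈ 𝒮, s ⊆ U)
    (hn : n = (𝒮.card - 1) ⌈/⌉ (k - 1)) :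
    (∃ 𝒞 ⊆ 𝒮, 𝒞.card ≤ k ∧ 𝒞.biUnion id = U) ↔
      (∃ T : Fin n → Finset (ReductionStudent 𝒮 n),
        (∀ i j : Fin n, i ≠ j → Disjoint (T i) (T j)) ∧
        (Finset.univ.biUnion T = Finset.univ) ∧
        (∀ j : Fin n, 1 ≤ (T j).card ∧ (T j).card ≤ k ∧
          U.card ≤ ((T j).biUnion (reductionSkill U 𝒮 n)).card)) := by
  classical
  set m := 𝒮.card with hm
  have hq : 0 < k - 1 := by omega
  have hle : m - 1 ≤ (k - 1) * n := by rw [hn]; exact le_smul_ceilDiv hq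
  have hmulsub : (k - 1) * (n - 1) = (k - 1) * n - (k - 1) := Nat.mul_sub_one (k - 1) n
  have hn1 : 1 ≤ n := by
    rcases Nat.eq_zero_or_pos n with h | h
    · rw [h] at hle; simp at hle; omega
    · exact h
  haveI : NeZero n := ⟨by omega⟩
  constructor
  · -- forward direction
    rintro ⟨𝒞, h𝒞S, h𝒞k, h𝒞U⟩
    set b := max (max 1 𝒞.card) (m - (k - 1) * (n - 1)) with hb
    have hkey : m ≤ (k - 1) * (n - 1) + k := by omega
    have hb1 : 1 ≤ b := le_trans (le_max_left 1 _) (le_max_left _ _)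
    have hbk : b ≤ k := by
      apply max_le (max_le (by omega) h𝒞k); omega
    have hbm : b ≤ m := hbk.trans hks
    have hrem : m - b ≤ (k - 1) * (n - 1) := by
      have : m - (k - 1) * (n - 1) ≤ b := le_max_right _ _
      omega
    obtain ⟨𝒞', h𝒞𝒞', h𝒞'S, h𝒞'card⟩ :=
      Finset.exists_subsuperset_card_eq h𝒞S (le_trans (le_max_right 1 _) (le_max_left _ _)) hbm
    set R := 𝒮 \ 𝒞' with hRdef
    have hR : R.card = m - b := by
      rw [hRdef, Finset.card_sdiff_of_subset h𝒞'S, h𝒞'card]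
    have hmemR : ∀ (s : {s // s ∈ 𝒮}), s.val ∉ 𝒞' → s.val ∈ R := fun s h =>
      Finset.mem_sdiff.2 ⟨s.2, h⟩
    have hidx : ∀ (x : {x // x ∈ R}), (R.equivFin x).val / (k - 1) + 1 < n := by
      intro x
      have h1 : (R.equivFin x).val < R.card := (R.equivFin x).isLt
      have hcardle : R.card ≤ (n - 1) * (k - 1) := by
        rw [hR, mul_comm]; exact hrem
      have h2 : (R.equivFin x).val < (n - 1) * (k - 1) := lt_of_lt_of_le h1 hcardle
      have := (Nat.div_lt_iff_lt_mul hq).2 h2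
      omega
    set F : ReductionStudent 𝒮 n → Fin n := fun st =>
      Sum.elim
        (fun s => if h : s.val ∈ 𝒞' then (0 : Fin n)
          else ⟨(R.equivFin ⟨s.val, hmemR s h⟩).val / (k - 1) + 1,
            hidx ⟨s.val, hmemR s h⟩⟩)
        (fun x => (⟨x.val + 1, by have := x.isLt; omega⟩ : Fin n)) st
      with hF
    set T : Fin n → Finset (ReductionStudent 𝒮 n) :=
      fun i => Finset.univ.filter (fun st => F st = i) with hT
    have memT : ∀ (st : ReductionStudent 𝒮 n) (i : Fin n), st ∈ T i ↔ F st = i := by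
      intro st i; simp [hT]
    have hF0 : ∀ (s : {s // s ∈ 𝒮}), s.val ∈ 𝒞' → F (Sum.inl s) = 0 := by
      intro s h; simp [hF, h]
    have hF1 : ∀ (s : {s // s ∈ 𝒮}) (h : s.val ∉ 𝒞'),
        (F (Sum.inl s)).val = (R.equivFin ⟨s.val, hmemR s h⟩).val / (k - 1) + 1 := by
      intro s h; simp [hF, h]
    have hFr : ∀ (x : Fin (n - 1)), (F (Sum.inr x)).val = x.val + 1 := by
      intro x; simp [hF]
    refine ⟨T, ?_, ?_, ?_⟩
    · intro i j hij
      rw [Finset.disjoint_left]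
      intro a hai haj
      rw [memT] at hai haj
      exact hij (hai ▸ haj)
    · ext st
      simp only [Finset.mem_biUnion, Finset.mem_univ, iff_true, true_and]
      exact ⟨F st, (memT st (F st)).2 rfl⟩
    · intro j
      by_cases hj0 : j = 0
      · -- team 0
        subst hj0
        -- every member of T 0 is inl of an element of 𝒞'
        have hmem0 : ∀ st ∈ T 0, ∃ (s : {s // s ∈ 𝒮}), st = Sum.inl s ∧ s.val ∈ 𝒞' := by
          intro st hst
          rw [memT] at hst
          cases st with
          | inl s =>
            refine ⟨s, rfl, ?_⟩
            by_contra h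
            have := hF1 s h
            rw [hst] at this
            simp at this
          | inr x =>
            have := hFr x
            rw [hst] at this
            simp at this
        constructor
        · -- nonempty
          have : 𝒞'.Nonempty := Finset.card_pos.1 (by omega)
          obtain ⟨c, hc⟩ := this
          rw [Nat.one_le_iff_ne_zero, ← Nat.pos_iff_ne_zero, Finset.card_pos]
          exact ⟨Sum.inl ⟨c, h𝒞'S hc⟩, (memT _ _).2 (hF0 ⟨c, h𝒞'S hc⟩ hc)⟩
        constructor
        · -- card ≤ k
          calc (T 0).card ≤ 𝒞'.card := by
                apply Finset.card_le_card_of_injOn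
                  (fun st => Sum.elim (fun s => s.val) (fun _ => (∅ : Finset ℕ)) st)
                · intro st hst
                  obtain ⟨s, rfl, hs⟩ := hmem0 st hst
                  exact hs
                · intro st₁ h₁ st₂ h₂ hval
                  obtain ⟨s₁, rfl, _⟩ := hmem0 st₁ h₁
                  obtain ⟨s₂, rfl, _⟩ := hmem0 st₂ h₂
                  simp only [Sum.elim_inl] at hval
                  exact congrArg Sum.inl (Subtype.ext hval)
            _ = b := h𝒞'card
            _ ≤ k := hbk
        · -- coverage
          apply Finset.card_le_card
          intro u hu
          rw [← h𝒞U] at hu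
          obtain ⟨c, hc, huc⟩ := Finset.mem_biUnion.1 hu
          refine Finset.mem_biUnion.2 ⟨Sum.inl ⟨c, h𝒞S hc⟩, ?_, ?_⟩
          · exact (memT _ _).2 (hF0 ⟨c, h𝒞S hc⟩ (h𝒞𝒞' hc))
          · exact huc
      · -- team j ≠ 0
        have hjval : 1 ≤ j.val := by
          rcases Nat.eq_zero_or_pos j.val with h | h
          · exact absurd (Fin.ext (by simp only [Fin.val_zero]; exact h)) hj0
          · exact h
        set r := j.val - 1 with hr
        have hrn : r < n - 1 := by have := j.isLt; omega
        have hinrmem : Sum.inr (⟨r, hrn⟩ : Fin (n - 1)) ∈ T j := by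
          rw [memT]
          apply Fin.ext
          rw [hFr]
          show r + 1 = j.val
          omega
        constructor
        · rw [Nat.one_le_iff_ne_zero, ← Nat.pos_iff_ne_zero, Finset.card_pos]
          exact ⟨_, hinrmem⟩
        constructor
        · -- card ≤ k : split into inl part and inr part
          have hsplit := Finset.card_filter_add_card_filter_not
            (s := T j) (p := fun st => st.isLeft)
          have hinr : ((T j).filter (fun st => ¬ st.isLeft)).card ≤ 1 := by
            apply Finset.card_le_one.2
            intro a ha b hb
            simp only [Finset.mem_filter] at ha hb
            obtain ⟨ha1, ha2⟩ := ha
            obtain ⟨hb1, hb2⟩ := hb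
            cases a with
            | inl s => simp at ha2
            | inr x =>
              cases b with
              | inl s => simp at hb2
              | inr y =>
                rw [memT] at ha1 hb1
                have hx := hFr x
                have hy := hFr y
                rw [ha1] at hx; rw [hb1] at hy
                have : x = y := Fin.ext (by omega)
                rw [this]
          have hinl : ((T j).filter (fun st => st.isLeft)).card ≤ k - 1 := by
            have hmeml : ∀ st ∈ (T j).filter (fun st => st.isLeft),
                ∃ (s : {s // s ∈ 𝒮}) (h : s.val ∉ 𝒞'), st = Sum.inl s ∧
                  (R.equivFin ⟨s.val, hmemR s h⟩).val / (k - 1) = r := by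
              intro st hst
              simp only [Finset.mem_filter] at hst
              obtain ⟨hst1, hst2⟩ := hst
              cases st with
              | inr x => simp at hst2
              | inl s =>
                rw [memT] at hst1
                have hnot : s.val ∉ 𝒞' := by
                  intro h
                  have := hF0 s h
                  rw [hst1] at this
                  exact hj0 this
                refine ⟨s, hnot, rfl, ?_⟩
                have := hF1 s hnot
                rw [hst1] at this
                omega
            calc ((T j).filter (fun st => st.isLeft)).card
                ≤ (Finset.Ico (r * (k - 1)) (r * (k - 1) + (k - 1))).card := by
                  apply Finset.card_le_card_of_injOn
                    (fun st => Sum.elim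
                      (fun (s : {s // s ∈ 𝒮}) =>
                        if h : s.val ∈ 𝒞' then 0
                        else (R.equivFin ⟨s.val, hmemR s h⟩).val)
                      (fun _ => 0) st)
                  · intro st hst
                    obtain ⟨s, hnot, rfl, hdiv⟩ := hmeml st hst
                    simp only [Sum.elim_inl, dif_neg hnot, Finset.coe_Ico, Set.mem_Ico]
                    constructor
                    · rw [← hdiv]
                      exact Nat.div_mul_le_self _ _
                    · have h1 : (R.equivFin ⟨s.val, hmemR s hnot⟩).val / (k - 1) < r + 1 := by
                        omega
                      have := (Nat.div_lt_iff_lt_mul hq).1 h1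
                      calc (R.equivFin ⟨s.val, hmemR s hnot⟩).val
                          < (r + 1) * (k - 1) := this
                        _ = r * (k - 1) + (k - 1) := by ring
                  · intro st₁ h₁ st₂ h₂ hval
                    obtain ⟨s₁, hnot₁, rfl, _⟩ := hmeml st₁ h₁
                    obtain ⟨s₂, hnot₂, rfl, _⟩ := hmeml st₂ h₂
                    simp only [Sum.elim_inl, dif_neg hnot₁, dif_neg hnot₂] at hval
                    have : R.equivFin ⟨s₁.val, hmemR s₁ hnot₁⟩
                        = R.equivFin ⟨s₂.val, hmemR s₂ hnot₂⟩ := Fin.ext hval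
                    have h2 := R.equivFin.injective this
                    have h3 : s₁.val = s₂.val := Subtype.mk_eq_mk.1 h2
                    exact congrArg Sum.inl (Subtype.ext h3)
              _ = k - 1 := by rw [Nat.card_Ico]; omega
          omega
        · -- coverage: contains all-rounder
          apply Finset.card_le_card
          intro u hu
          refine Finset.mem_biUnion.2 ⟨Sum.inr ⟨r, hrn⟩, hinrmem, ?_⟩
          exact hu
  · -- backward direction
    rintro ⟨T, hdisj, hcover, hteam⟩
    -- find a team with no all-rounder
    have hpure : ∃ j, ∀ st ∈ T j, st.isLeft := by
      by_contra h
      push_neg at h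
      have h' : ∀ j : Fin n, ∃ x : Fin (n - 1), Sum.inr x ∈ T j := by
        intro j
        obtain ⟨st, hst, hstl⟩ := h j
        cases st with
        | inl s => simp at hstl
        | inr x => exact ⟨x, hst⟩
      choose g hg using h'
      have hginj : Function.Injective g := by
        intro a b hab
        by_contra hne
        exact (Finset.disjoint_left.1 (hdisj a b hne) (hg a))
          (by rw [hab]; exact hg b)
      have := Fintype.card_le_of_injective g hginj
      simp only [Fintype.card_fin] at this
      omega
    obtain ⟨j, hj⟩ := hpure
    have hmeml : ∀ st ∈ T j, ∃ (s : {s // s ∈ 𝒮}), st = Sum.inl s := by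
      intro st hst
      cases st with
      | inl s => exact ⟨s, rfl⟩
      | inr x => have := hj _ hst; simp at this
    refine ⟨(T j).image (reductionSkill U 𝒮 n), ?_, ?_, ?_⟩
    · intro x hx
      obtain ⟨st, hst, rfl⟩ := Finset.mem_image.1 hx
      obtain ⟨s, rfl⟩ := hmeml st hst
      exact s.2
    · exact Finset.card_image_le.trans (hteam j).2.1
    · have himg : ((T j).image (reductionSkill U 𝒮 n)).biUnion id
          = (T j).biUnion (reductionSkill U 𝒮 n) := by
        rw [Finset.image_biUnion]
        rfl
      rw [himg]
      apply Finset.eq_of_subset_of_card_le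
      · intro u hu
        obtain ⟨st, hst, hust⟩ := Finset.mem_biUnion.1 hu
        obtain ⟨s, rfl⟩ := hmeml st hst
        exact hsub s.val s.2 hust
      · exact (hteam j).2.2
end
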